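/- For every real matrix H ∈ ℝ^{n×m} there exist matrices W₁ ∈ ℝ^{n×n} and W₂ ∈ ℝ^{m×m} such that the block matrix [[W₁, H], [Hᵀ, W₂]] ∈ ℝ^{(n+m)×(n+m)} is positive semidefinite and ½(trace(W₁) + trace(W₂)) = trace((Hᵀ H)^{1/2}); consequently, the nuclear norm of H equals the minimum of ½(trace(W₁) + trace(W₂)) over all such positive semidefinite block completions. -/

import Mathlib

open Matrix

/-- `Hᵀ H` is positive semidefinite. -/
theorem transpose_mul_self_posSemidef {n m : ℕ} (H : Matrix (Fin n) (Fin m) ℝ) :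
    (Hᵀ * H).PosSemidef := by
  simpa [Matrix.conjTranspose_eq_transpose_of_trivial] using
    Matrix.posSemidef_conjTranspose_mul_self H

section OldSqrt

open scoped ComplexOrder

/-- The square root of a positive semidefinite matrix, as defined in the older Mathlib
(removed since); restored here with its original definition. -/
noncomputable def Matrix.PosSemidef.sqrt {n 𝕜 : Type*} [Fintype n] [RCLike 𝕜] [DecidableEq n]
    {A : Matrix n n 𝕜} (hA : A.PosSemidef) : Matrix n n 𝕜 :=
  hA.1.eigenvectorUnitary.1 * diagonal ((↑) ∘ (√·) ∘ hA.1.eigenvalues) *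
    (star hA.1.eigenvectorUnitary : Matrix n n 𝕜)

end OldSqrt

/-! The square root `S = (Hᵀ H)^{1/2}` yields a polar decomposition `H = U S`, with `U = H S⁺`
a partial isometry satisfying `Uᵀ U S = S`. The completion `W₁ = U S Uᵀ`, `W₂ = S` is
`[U; 1] S [U; 1]ᵀ`, hence positive semidefinite, and has trace `2 tr S`. Conversely, testing
a positive semidefinite completion against `[U; -1]` gives `2 tr S ≤ tr (Uᵀ W₁ U) + tr W₂`,
and `tr (Uᵀ W₁ U) ≤ tr W₁` because `U Uᵀ` is an orthogonal projection. -/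

open scoped ComplexOrder

namespace Matrix

variable {m n 𝕜 : Type*} [Fintype m] [Fintype n] [RCLike 𝕜]

theorem exists_partialIsometry_mul_eq_of_pseudoinverse [DecidableEq n] {H : Matrix m n 𝕜}
    {S T : Matrix n n 𝕜} (hT : T.IsHermitian) (hSH : S * S = Hᴴ * H) (hST : S * T = T * S)
    (hSTS : S * T * S = S) (hTST : T * S * T = T) :
    ∃ U : Matrix m n 𝕜, H = U * S ∧ Uᴴ * U * S = S ∧ U * Uᴴ * U = U := by
  have hSE : S * (S * T) = S := by rw [hST, ← Matrix.mul_assoc, hSTS]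
  -- `H (1 - S T)` has zero Gram matrix because `S (1 - S T) = 0`.
  have hH : H * (S * T) = H := by
    have h : (H * (1 - S * T))ᴴ * (H * (1 - S * T)) = 0 := by
      rw [conjTranspose_mul, Matrix.mul_assoc, ← Matrix.mul_assoc Hᴴ, ← hSH,
        Matrix.mul_assoc S, Matrix.mul_sub, Matrix.mul_one, hSE, sub_self, Matrix.mul_zero,
        Matrix.mul_zero]
    rw [conjTranspose_mul_self_eq_zero, Matrix.mul_sub, Matrix.mul_one, sub_eq_zero] at h
    exact h.symm
  have hUU : (H * T)ᴴ * (H * T) = S * T := by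
    calc (H * T)ᴴ * (H * T) = T * S * (S * T) := by
          rw [conjTranspose_mul, hT.eq, Matrix.mul_assoc, ← Matrix.mul_assoc Hᴴ, ← hSH]
          simp only [Matrix.mul_assoc]
      _ = S * T := by rw [← hST, ← Matrix.mul_assoc, hSTS]
  refine ⟨H * T, ?_, ?_, ?_⟩
  · rw [Matrix.mul_assoc, ← hST, hH]
  · rw [hUU, hSTS]
  · rw [Matrix.mul_assoc, hUU, Matrix.mul_assoc, ← Matrix.mul_assoc T, hTST]

namespace PosSemidef

variable [DecidableEq n] {A : Matrix n n 𝕜}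

theorem sqrt_eq_conjStarAlgAut (hA : A.PosSemidef) :
    hA.sqrt = Unitary.conjStarAlgAut 𝕜 _ hA.1.eigenvectorUnitary
      (diagonal ((↑) ∘ (√·) ∘ hA.1.eigenvalues)) := rfl

theorem posSemidef_sqrt (hA : A.PosSemidef) : hA.sqrt.PosSemidef := by
  rw [sqrt_eq_conjStarAlgAut, Unitary.conjStarAlgAut_apply, star_eq_conjTranspose]
  exact (PosSemidef.diagonal fun i => by simp).mul_mul_conjTranspose_same _

theorem sqrt_mul_self (hA : A.PosSemidef) : hA.sqrt * hA.sqrt = A := by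
  conv_rhs => rw [hA.1.spectral_theorem]
  rw [sqrt_eq_conjStarAlgAut, ← map_mul, diagonal_mul_diagonal]
  congr 2
  funext i
  simp [← RCLike.ofReal_mul, Real.mul_self_sqrt (hA.eigenvalues_nonneg i)]

theorem exists_pseudoinverse_sqrt (hA : A.PosSemidef) :
    ∃ T : Matrix n n 𝕜, T.IsHermitian ∧ hA.sqrt * T = T * hA.sqrt ∧
      hA.sqrt * T * hA.sqrt = hA.sqrt ∧ T * hA.sqrt * T = T := by
  set s : n → 𝕜 := (↑) ∘ (√·) ∘ hA.1.eigenvalues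
  set φ := Unitary.conjStarAlgAut 𝕜 (Matrix n n 𝕜) hA.1.eigenvectorUnitary
  have hS : hA.sqrt = φ (diagonal s) := rfl
  -- `s⁻¹` inverts the nonzero entries of `s` and keeps its zeros, as `0⁻¹ = 0`.
  refine ⟨φ (diagonal s⁻¹), ?_, ?_, ?_, ?_⟩
  · change star (φ _) = φ _
    rw [← map_star, star_eq_conjTranspose, diagonal_conjTranspose]
    congr 2
    funext i
    simp [s]
  all_goals
    simp only [hS, ← map_mul, diagonal_mul_diagonal]
    congr 2
    funext i
  · exact mul_comm _ _
  · exact mul_inv_mul_cancel _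
  · simpa using mul_inv_mul_cancel (s i)⁻¹

theorem exists_partialIsometry_mul_sqrt (hA : A.PosSemidef) {H : Matrix m n 𝕜}
    (hH : Hᴴ * H = A) :
    ∃ U : Matrix m n 𝕜,
      H = U * hA.sqrt ∧ Uᴴ * U * hA.sqrt = hA.sqrt ∧ U * Uᴴ * U = U := by
  obtain ⟨T, hT, hST, hSTS, hTST⟩ := hA.exists_pseudoinverse_sqrt
  exact exists_partialIsometry_mul_eq_of_pseudoinverse hT (hA.sqrt_mul_self.trans hH.symm)
    hST hSTS hTST

end PosSemidef

theorem trace_conjTranspose_mul_mul_le_of_partialIsometry {W : Matrix m m 𝕜} (hW : W.PosSemidef)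
    {U : Matrix m n 𝕜} (hU : U * Uᴴ * U = U) : (Uᴴ * W * U).trace ≤ W.trace := by
  classical
  set Q := 1 - U * Uᴴ
  have hQ : Qᴴ = Q := by simp [Q, conjTranspose_sub]
  have hQQ : Q * Q = Q := by
    simp only [Q, Matrix.sub_mul, Matrix.mul_sub, Matrix.one_mul, Matrix.mul_one,
      ← Matrix.mul_assoc, hU]
    abel
  have hdiff : W.trace - (Uᴴ * W * U).trace = (Q * W * Qᴴ).trace := by
    rw [hQ, trace_mul_cycle Q, hQQ, trace_mul_cycle Uᴴ]
    simp [Q, Matrix.sub_mul, trace_sub]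
  exact sub_nonneg.mp (hdiff ▸ (hW.mul_mul_conjTranspose_same Q).trace_nonneg)

theorem posSemidef_fromBlocks_mul_mul_conjTranspose [DecidableEq n] {S : Matrix n n 𝕜}
    (hS : S.PosSemidef) (U : Matrix m n 𝕜) :
    (fromBlocks (U * S * Uᴴ) (U * S) (U * S)ᴴ S).PosSemidef := by
  have hblock : fromBlocks (U * S * Uᴴ) (U * S) (U * S)ᴴ S =
      fromRows U 1 * S * (fromRows U 1)ᴴ := by
    rw [conjTranspose_fromRows_eq_fromCols_conjTranspose, fromRows_mul, fromRows_mul_fromCols,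
      conjTranspose_mul, hS.1, conjTranspose_one]
    simp
  exact hblock ▸ hS.mul_mul_conjTranspose_same _

theorem two_mul_trace_le_of_posSemidef_fromBlocks [DecidableEq n] {W₁ : Matrix m m 𝕜}
    {W₂ : Matrix n n 𝕜} {U : Matrix m n 𝕜} {S : Matrix n n 𝕜} (hS : S.IsHermitian)
    (hUS : Uᴴ * U * S = S) (hU : U * Uᴴ * U = U)
    (hM : (fromBlocks W₁ (U * S) (U * S)ᴴ W₂).PosSemidef) :
    2 * S.trace ≤ W₁.trace + W₂.trace := by
  have hW₁ : W₁.PosSemidef := toBlocks_fromBlocks₁₁ W₁ _ _ W₂ ▸ hM.submatrix Sum.inl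
  have hSU : S * Uᴴ * U = S := by
    simpa [hS.eq, Matrix.mul_assoc] using congrArg conjTranspose hUS
  set K : Matrix (m ⊕ n) n 𝕜 := fromRows U (-1)
  have hK : Kᴴ * fromBlocks W₁ (U * S) (U * S)ᴴ W₂ * K =
      Uᴴ * W₁ * U + W₂ - S - S := by
    rw [conjTranspose_fromRows_eq_fromCols_conjTranspose, Matrix.mul_assoc,
      fromBlocks_mul_fromRows, fromCols_mul_fromRows]
    simp only [conjTranspose_mul, hS.eq, conjTranspose_neg, conjTranspose_one, Matrix.mul_neg,
      Matrix.neg_mul, Matrix.mul_one, Matrix.one_mul, Matrix.mul_add, ← Matrix.mul_assoc, hSU,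
      hUS]
    abel
  have h := (hM.conjTranspose_mul_mul_same K).trace_nonneg
  rw [hK, trace_sub, trace_sub, trace_add] at h
  have h₁ := trace_conjTranspose_mul_mul_le_of_partialIsometry hW₁ hU
  rw [two_mul]
  calc S.trace + S.trace ≤ (Uᴴ * W₁ * U).trace + W₂.trace := by
        simpa [sub_sub, sub_nonneg] using h
    _ ≤ W₁.trace + W₂.trace := add_le_add_left h₁ _

end Matrix

/-- The nuclear norm `trace ((Hᵀ H)^{1/2})` of `H` is the minimum of
`½(trace W₁ + trace W₂)` over all `W₁, W₂` making the block matrix `[[W₁, H], [Hᵀ, W₂]]`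
positive semidefinite; in particular such a minimizing pair exists. -/
theorem nuclear_norm_eq_min_block_posSemidef {n m : ℕ} (H : Matrix (Fin n) (Fin m) ℝ) :
    IsLeast
      {c : ℝ | ∃ (W₁ : Matrix (Fin n) (Fin n) ℝ) (W₂ : Matrix (Fin m) (Fin m) ℝ),
        (Matrix.fromBlocks W₁ H Hᵀ W₂).PosSemidef ∧ c = (W₁.trace + W₂.trace) / 2}
      (transpose_mul_self_posSemidef H).sqrt.trace := by
  set hA := transpose_mul_self_posSemidef H
  have hS := hA.posSemidef_sqrt
  obtain ⟨U, hHU, hUS, hU⟩ :=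
    hA.exists_partialIsometry_mul_sqrt (by rw [conjTranspose_eq_transpose_of_trivial])
  generalize hA.sqrt = S at hS hHU hUS ⊢
  rw [← conjTranspose_eq_transpose_of_trivial H, hHU]
  constructor
  · refine ⟨U * S * Uᴴ, S, posSemidef_fromBlocks_mul_mul_conjTranspose hS U, ?_⟩
    rw [trace_mul_cycle, hUS]
    ring
  · rintro c ⟨W₁, W₂, hM, rfl⟩
    have := two_mul_trace_le_of_posSemidef_fromBlocks hS.1 hUS hU hM
    linarith
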